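/- Let B be a k × n rectangular Flood-It board with colours from a set C of size c, let G_B be its associated coloured graph, and let u and v be vertices of G_B corresponding to squares incident with the left-hand and right-hand edges of the board respectively. Then m_{G_B}(u,v) ≤ m(B) ≤ m_{G_B}(u,v) + c(k−1), where m(B) is the minimum number of moves to flood the whole board and m_{G_B}(u,v) is the minimum number of moves to link u and v. -/

import Mathlib

namespace Flood

variable {V C : Type*}

/-- Two vertices are joined by an edge inside a monochromatic class. -/
def monoAdj (G : SimpleGraph V) (ω : V → C) (a b : V) : Prop :=
  G.Adj a b ∧ ω a = ω b

/-- `u` and `v` lie in a common monochromatic component of the colouring `ω`. -/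
def monoLinked (G : SimpleGraph V) (ω : V → C) (u v : V) : Prop :=
  Relation.ReflTransGen (monoAdj G ω) u v

/-- One flooding move: recolour the monochromatic component of `v` with colour `d`. -/
noncomputable def floodMove (G : SimpleGraph V) (ω : V → C) (v : V) (d : C) : V → C :=
  fun u => @ite _ (monoLinked G ω v u) (Classical.propDecidable _) d (ω u)

/-- Apply a sequence of flooding moves. -/
noncomputable def floodSeq (G : SimpleGraph V) (ω : V → C) (S : List (V × C)) : V → C :=
  S.foldl (fun ω' m => floodMove G ω' m.1 m.2) ω

/-- The sequence `S` floods `G`, i.e. makes it monochromatic. -/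
def Floods (G : SimpleGraph V) (ω : V → C) (S : List (V × C)) : Prop :=
  ∀ a b, floodSeq G ω S a = floodSeq G ω S b

/-- Minimum number of moves needed to make `G` monochromatic. -/
noncomputable def floodCost (G : SimpleGraph V) (ω : V → C) : ℕ :=
  sInf {k | ∃ S, S.length = k ∧ Floods G ω S}

/-- Minimum number of moves needed to make `G` monochromatic in colour `d`. -/
noncomputable def floodCostIn (G : SimpleGraph V) (ω : V → C) (d : C) : ℕ :=
  sInf {k | ∃ S, S.length = k ∧ ∀ a, floodSeq G ω S a = d}

/-- The sequence `S` links `u` and `v`. -/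
def Links (G : SimpleGraph V) (ω : V → C) (S : List (V × C)) (u v : V) : Prop :=
  monoLinked G (floodSeq G ω S) u v

/-- Minimum number of moves needed to link `u` and `v`. -/
noncomputable def linkCost (G : SimpleGraph V) (ω : V → C) (u v : V) : ℕ :=
  sInf {k | ∃ S, S.length = k ∧ Links G ω S u v}

/-- Minimum number of moves needed to link `u` and `v` in a monochromatic
component of colour `d`. -/
noncomputable def linkCostIn (G : SimpleGraph V) (ω : V → C) (u v : V) (d : C) : ℕ :=
  sInf {k | ∃ S, S.length = k ∧ Links G ω S u v ∧ floodSeq G ω S u = d}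


/-- The `k × n` grid graph (squares adjacent horizontally or vertically). -/
def gridGraph (k n : ℕ) : SimpleGraph (Fin k × Fin n) :=
  SimpleGraph.fromRel (fun a b =>
    (a.1 = b.1 ∧ a.2.val + 1 = b.2.val) ∨ (a.2 = b.2 ∧ a.1.val + 1 = b.1.val))

end Flood

open Flood

/-!
A flooding sequence leaves the board monochromatic, and the board is connected, so it
links `u` and `v`. Conversely, once `u` and `v` are linked, the component of `u` crosses
the board from left to right and so meets every column: every square is then at most
`k - 1` vertical steps away from it. A round of `c` moves at `u`, one per colour, absorbs
every current neighbour of the component, so `k - 1` rounds flood the board.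
-/

namespace Flood

open SimpleGraph Relation

variable {V C : Type*} {G : SimpleGraph V} {ω : V → C} {u v x y : V}

theorem floodSeq_append (ω : V → C) (S T : List (V × C)) :
    floodSeq G ω (S ++ T) = floodSeq G (floodSeq G ω S) T :=
  List.foldl_append

theorem floodSeq_cons (ω : V → C) (s : V × C) (S : List (V × C)) :
    floodSeq G ω (s :: S) = floodSeq G (floodMove G ω s.1 s.2) S :=
  rfl

theorem floodMove_of_not_monoLinked (d : C) (hx : ¬ monoLinked G ω u x) :
    floodMove G ω u d x = ω x :=
  if_neg hx

theorem floodMove_of_monoLinked (d : C) (hx : monoLinked G ω u x) :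
    floodMove G ω u d x = d :=
  if_pos hx

theorem monoLinked.colour_eq (h : monoLinked G ω u x) : ω x = ω u := by
  induction h with
  | refl => rfl
  | tail _ hab ih => exact hab.2 ▸ ih

theorem monoLinked_of_reachable (h : G.Reachable u v) (hω : ∀ a b, ω a = ω b) :
    monoLinked G ω u v :=
  ReflTransGen.mono (fun a b hab => ⟨hab, hω a b⟩) u v ((reachable_iff_reflTransGen u v).1 h)

theorem monoLinked.floodMove (d : C) (h : monoLinked G ω u x) :
    monoLinked G (floodMove G ω u d) u x := by
  induction h with
  | refl => exact .refl
  | @tail a b ha hab ih =>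
    refine ih.tail ⟨hab.1, ?_⟩
    rw [floodMove_of_monoLinked d ha, floodMove_of_monoLinked d (ha.tail hab)]

theorem monoLinked.floodSeq (h : monoLinked G ω u x) {S : List (V × C)}
    (hS : ∀ s ∈ S, s.1 = u) : monoLinked G (floodSeq G ω S) u x := by
  induction S generalizing ω with
  | nil => exact h
  | cons s S ih =>
    obtain ⟨w, d⟩ := s
    obtain rfl : w = u := hS _ List.mem_cons_self
    exact ih (h.floodMove d) fun s hs => hS s (List.mem_cons_of_mem _ hs)

theorem monoLinked_floodMove_of_adj (hy : monoLinked G ω u y) (hyx : G.Adj y x)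
    (hx : ¬ monoLinked G ω u x) : monoLinked G (floodMove G ω u (ω x)) u x := by
  refine (hy.floodMove _).tail ⟨hyx, ?_⟩
  rw [floodMove_of_monoLinked _ hy, floodMove_of_not_monoLinked _ hx]

theorem monoLinked_floodSeq_of_adj (hy : monoLinked G ω u y) (hyx : G.Adj y x)
    {L : List C} (hL : ω x ∈ L) : monoLinked G (floodSeq G ω (L.map (Prod.mk u))) u x := by
  have hmoves : ∀ L : List C, ∀ s ∈ L.map (Prod.mk u), s.1 = u := by simp
  induction L generalizing ω with
  | nil => simp at hL
  | cons d L ih =>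
    by_cases hx : monoLinked G ω u x
    · exact hx.floodSeq (hmoves _)
    rw [List.map_cons, floodSeq_cons]
    rcases List.mem_cons.1 hL with rfl | hL
    · exact (monoLinked_floodMove_of_adj hy hyx hx).floodSeq (hmoves _)
    · exact ih (hy.floodMove d) (by rwa [floodMove_of_not_monoLinked d hx])

def colourRounds (u : V) (L : List C) (m : ℕ) : List (V × C) :=
  (List.replicate m (L.map (Prod.mk u))).flatten

theorem length_colourRounds (u : V) (L : List C) (m : ℕ) :
    (colourRounds u L m).length = m * L.length := by
  simp [colourRounds]

theorem colourRounds_succ (u : V) (L : List C) (m : ℕ) :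
    colourRounds u L (m + 1) = L.map (Prod.mk u) ++ colourRounds u L m := by
  simp [colourRounds, List.replicate_succ]

theorem fst_eq_of_mem_colourRounds {L : List C} {m : ℕ} :
    ∀ s ∈ colourRounds u L m, s.1 = u := by
  simp +contextual [colourRounds, eq_comm]

def NearComponent (G : SimpleGraph V) (ω : V → C) (u : V) (m : ℕ) (x : V) : Prop :=
  ∃ y, monoLinked G ω u y ∧ ∃ p : G.Walk y x, p.length ≤ m

theorem monoLinked_colourRounds_of_walk {L : List C} (hL : ∀ d, d ∈ L) {y x : V}
    (p : G.Walk y x) : ∀ {ω : V → C} {m : ℕ}, monoLinked G ω u y → p.length ≤ m →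
      monoLinked G (floodSeq G ω (colourRounds u L m)) u x := by
  induction p with
  | nil => exact fun hy _ => hy.floodSeq fst_eq_of_mem_colourRounds
  | @cons y z x hyz q ih =>
    intro ω m hy hm
    obtain ⟨m, rfl⟩ : ∃ m', m = m' + 1 := ⟨m - 1, by simp at hm; omega⟩
    rw [colourRounds_succ, floodSeq_append]
    exact ih (monoLinked_floodSeq_of_adj hy hyz (hL _)) (by simpa using hm)

theorem floods_colourRounds {L : List C} (hL : ∀ d, d ∈ L) {m : ℕ}
    (h : ∀ x, NearComponent G ω u m x) : Floods G ω (colourRounds u L m) := by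
  have hlinked : ∀ x, monoLinked G (floodSeq G ω (colourRounds u L m)) u x := fun x => by
    obtain ⟨y, hy, p, hp⟩ := h x
    exact monoLinked_colourRounds_of_walk hL p hy hp
  intro a b
  rw [(hlinked a).colour_eq, (hlinked b).colour_eq]

theorem _root_.SimpleGraph.Reachable.exists_walk_length_lt [Fintype V] {x y : V}
    (h : G.Reachable x y) : ∃ p : G.Walk x y, p.length < Fintype.card V := by
  classical
  exact ⟨h.some.bypass, h.some.bypass_isPath.length_lt⟩

theorem exists_floods [Fintype V] [Nonempty V] (hG : G.Preconnected) {L : List C}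
    (hL : ∀ d, d ∈ L) (ω : V → C) : ∃ S, Floods G ω S := by
  let u : V := Classical.arbitrary V
  refine ⟨colourRounds u L (Fintype.card V), floods_colourRounds hL fun x => ?_⟩
  obtain ⟨p, hp⟩ := Reachable.exists_walk_length_lt (hG u x)
  exact ⟨u, .refl, p, hp.le⟩

theorem floodCost_le_length {S : List (V × C)} (h : Floods G ω S) :
    floodCost G ω ≤ S.length :=
  Nat.sInf_le ⟨S, rfl, h⟩

theorem linkCost_le_length {S : List (V × C)} (h : Links G ω S u v) :
    linkCost G ω u v ≤ S.length :=
  Nat.sInf_le ⟨S, rfl, h⟩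

theorem _root_.List.exists_length_eq_sInf {α : Type*} {P : List α → Prop} (h : ∃ S, P S) :
    ∃ S, P S ∧ S.length = sInf {m | ∃ S : List α, S.length = m ∧ P S} := by
  obtain ⟨S, hS⟩ := h
  obtain ⟨T, hlen, hT⟩ := Nat.sInf_mem (s := {m | ∃ S : List α, S.length = m ∧ P S})
    ⟨_, S, rfl, hS⟩
  exact ⟨T, hT, hlen⟩

theorem Floods.links {S : List (V × C)} (h : Floods G ω S) (huv : G.Reachable u v) :
    Links G ω S u v :=
  monoLinked_of_reachable huv h

theorem linkCost_le_floodCost (huv : G.Reachable u v) (h : ∃ S, Floods G ω S) :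
    linkCost G ω u v ≤ floodCost G ω := by
  obtain ⟨S, hS, hlen⟩ := List.exists_length_eq_sInf h
  calc linkCost G ω u v ≤ S.length := linkCost_le_length (hS.links huv)
    _ = floodCost G ω := hlen

theorem floodCost_le_linkCost_add {L : List C} (hL : ∀ d, d ∈ L) {m : ℕ}
    (h : ∃ S, Links G ω S u v)
    (hnear : ∀ ω' : V → C, monoLinked G ω' u v → ∀ x, NearComponent G ω' u m x) :
    floodCost G ω ≤ linkCost G ω u v + m * L.length := by
  obtain ⟨S, hS, hlen⟩ := List.exists_length_eq_sInf h
  have hflood : Floods G ω (S ++ colourRounds u L m) := by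
    rw [Floods, floodSeq_append]
    exact floods_colourRounds hL (hnear _ hS)
  calc floodCost G ω ≤ (S ++ colourRounds u L m).length := floodCost_le_length hflood
    _ = linkCost G ω u v + m * L.length := by
      rw [List.length_append, length_colourRounds, hlen, linkCost]

theorem _root_.Relation.ReflTransGen.exists_apply_eq {α : Type*} {r : α → α → Prop}
    {a b : α} (h : ReflTransGen r a b) (f : α → ℕ) (hf : ∀ x y, r x y → f y ≤ f x + 1)
    {j : ℕ} (haj : f a ≤ j) (hjb : j ≤ f b) : ∃ w, ReflTransGen r a w ∧ f w = j := by
  induction h with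
  | refl => exact ⟨a, .refl, by omega⟩
  | @tail x y hx hxy ih =>
    rcases le_or_gt j (f x) with hj | hj
    · exact ih hj
    · exact ⟨y, hx.tail hxy, by have := hf x y hxy; omega⟩

section Grid

variable {k n : ℕ}

theorem gridGraph_eq_boxProd : gridGraph k n = pathGraph k □ pathGraph n := by
  ext ⟨a₁, a₂⟩ ⟨b₁, b₂⟩
  simp only [gridGraph, fromRel_adj, boxProd_adj, pathGraph_adj, Fin.ext_iff, ne_eq,
    Prod.mk.injEq]
  omega

theorem gridGraph_preconnected : (gridGraph k n).Preconnected :=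
  gridGraph_eq_boxProd ▸ (pathGraph_preconnected k).boxProd (pathGraph_preconnected n)

theorem gridGraph_snd_le_of_adj {a b : Fin k × Fin n} (h : (gridGraph k n).Adj a b) :
    b.2.val ≤ a.2.val + 1 := by
  rw [gridGraph_eq_boxProd, boxProd_adj, pathGraph_adj, pathGraph_adj] at h
  rcases h with ⟨_, h⟩ | ⟨_, _⟩
  · rw [h]; omega
  · omega

theorem gridGraph_exists_walk_column (i i' : Fin k) (j : Fin n) :
    ∃ p : (gridGraph k n).Walk (i, j) (i', j), p.length ≤ k - 1 := by
  obtain ⟨p, hp⟩ := Reachable.exists_walk_length_lt (pathGraph_preconnected k i i')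
  rw [gridGraph_eq_boxProd]
  have hlen : (p.boxProdLeft (pathGraph n) j).length = p.length := Walk.length_map _ _
  rw [Fintype.card_fin] at hp
  exact ⟨p.boxProdLeft (pathGraph n) j, by omega⟩

theorem gridGraph_nearComponent {C : Type*} {ω : Fin k × Fin n → C} {u v : Fin k × Fin n}
    (hu : u.2.val = 0) (hv : v.2.val = n - 1) (h : monoLinked (gridGraph k n) ω u v)
    (x : Fin k × Fin n) : NearComponent (gridGraph k n) ω u (k - 1) x := by
  obtain ⟨⟨i, j⟩, hw, hj⟩ := h.exists_apply_eq (fun a => a.2.val)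
    (fun _ _ hab => gridGraph_snd_le_of_adj hab.1) (j := x.2.val) (by omega)
    (by have := x.2.isLt; omega)
  obtain rfl : j = x.2 := Fin.ext hj
  obtain ⟨p, hp⟩ := gridGraph_exists_walk_column i x.1 x.2
  exact ⟨(i, x.2), hw, p, hp⟩

end Grid

end Flood

/-- for a `k × n` board with `c` colours and vertices `u`, `v` on
the left- and right-hand edges respectively,
`m(u,v) ≤ m(B) ≤ m(u,v) + c(k-1)`. -/
theorem board_flood_approx (k n c : ℕ) (ω : Fin k × Fin n → Fin c)
    (u v : Fin k × Fin n) (hu : u.2.val = 0) (hv : v.2.val = n - 1) :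
    linkCost (gridGraph k n) ω u v ≤ floodCost (gridGraph k n) ω ∧
    floodCost (gridGraph k n) ω ≤
      linkCost (gridGraph k n) ω u v + c * (k - 1) := by
  have hL : ∀ d : Fin c, d ∈ List.finRange c := List.mem_finRange
  have : Nonempty (Fin k × Fin n) := ⟨u⟩
  have hflood := exists_floods gridGraph_preconnected hL ω
  have huv : (gridGraph k n).Reachable u v := gridGraph_preconnected u v
  refine ⟨linkCost_le_floodCost huv hflood, ?_⟩
  have hupper := floodCost_le_linkCost_add hL (hflood.imp fun _ hS => hS.links huv)
    fun _ h => gridGraph_nearComponent hu hv h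
  rwa [List.length_finRange, mul_comm] at hupper
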